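/- arXiv:2108.10384 — 3 statements merged into one kernel-verified Lean document; each statement's English description precedes it below -/
import Mathlib

section
/- Let G be a finite abelian 2-group and let c ∈ G be an element of order 2. Then there exist an element y ∈ G and a subgroup A of G such that G is the internal direct product of ⟨y⟩ and A (that is, ⟨y⟩ ∩ A = {1} and every element of G is uniquely a product of an element of ⟨y⟩ and an element of A) and c ∈ ⟨y⟩. -/
/-!
An element `y₀` of maximal order generates a direct factor: a subgroup `A` maximal with
`⟨y₀⟩ ∩ A = 1` satisfies `⟨y₀⟩A = G`, for otherwise there are a prime `p` and `x ∉ ⟨y₀⟩A` with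
`x ^ p = y₀ ^ s * a`, `a ∈ A`. Maximality of the order of `y₀` forces `p ∣ s`, so replacing `x` by
`x * y₀ ^ (-s / p)` gives `x ^ p ∈ A`, and then `A⟨x⟩` still meets `⟨y₀⟩` trivially.

Now write `G = ⟨y₀⟩ × A₀` and `c = u * a` accordingly, so that `u ^ 2 = a ^ 2 = 1`. If `a ≠ 1`,
induction on `|G|` puts `a` into a cyclic factor of `A₀ = ⟨z⟩ × B`, and `a = z ^ n` where
`ord z = 2n`. As `ord z ∣ ord y₀`, some `v ∈ ⟨y₀⟩` has `v ^ (2n) = 1` and `v ^ n = u`; then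
`⟨z * v⟩` is again a complement of `B × ⟨y₀⟩`, and it contains `(z * v) ^ n = c`.
-/

open Subgroup

section

variable {G : Type*}

namespace Subgroup

theorem isComplement'_of_isCompl [Group G] {H K : Subgroup G} [K.Normal] (h : IsCompl H K) :
    IsComplement' H K :=
  isComplement'_of_disjoint_and_mul_eq_univ h.disjoint <| by
    rw [← mul_normal, h.sup_eq_top, coe_top]

theorem map_subtype_disjoint_and_sup_eq [Group G] {A : Subgroup G} {H K : Subgroup A}
    (h : IsCompl H K) :
    Disjoint (H.map A.subtype) (K.map A.subtype) ∧ H.map A.subtype ⊔ K.map A.subtype = A := by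
  refine ⟨disjoint_map A.subtype_injective h.disjoint, ?_⟩
  rw [← map_sup, h.sup_eq_top, ← MonoidHom.range_eq_map, range_subtype]

theorem dvd_of_zpow_mem [Group G] {M : Subgroup G} [M.Normal] {x : G} {p : ℕ} [Fact p.Prime]
    (hx : x ∉ M) (hxp : x ^ p ∈ M) {m : ℤ} (hm : x ^ m ∈ M) : (p : ℤ) ∣ m := by
  have hord : orderOf (x : G ⧸ M) = p := by
    refine orderOf_eq_prime ?_ ?_
    · rwa [← QuotientGroup.mk_pow, QuotientGroup.eq_one_iff]
    · rwa [Ne, QuotientGroup.eq_one_iff]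
  rw [← hord, orderOf_dvd_iff_zpow_eq_one, ← QuotientGroup.mk_zpow, QuotientGroup.eq_one_iff]
  exact hm

theorem exists_prime_pow_mem_of_ne_top [Group G] [Finite G] {M : Subgroup G} [M.Normal]
    (hM : M ≠ ⊤) : ∃ p : ℕ, p.Prime ∧ ∃ x ∉ M, x ^ p ∈ M := by
  have : Nontrivial (G ⧸ M) := QuotientGroup.nontrivial_iff.2 hM
  obtain ⟨p, hp, hdvd⟩ := Nat.exists_prime_and_dvd (Finite.one_lt_card (α := G ⧸ M)).ne'
  have : Fact p.Prime := ⟨hp⟩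
  obtain ⟨g, hg⟩ := exists_prime_orderOf_dvd_card' p hdvd
  obtain ⟨x, rfl⟩ := QuotientGroup.mk_surjective g
  refine ⟨p, hp, x, ?_, ?_⟩
  · rw [← QuotientGroup.eq_one_iff, ← orderOf_eq_one_iff, hg]
    exact hp.ne_one
  · rw [← QuotientGroup.eq_one_iff, QuotientGroup.mk_pow, ← hg, pow_orderOf_eq_one]

theorem disjoint_sup_zpowers [CommGroup G] {H A : Subgroup G} {x : G} {p : ℕ}
    [Fact p.Prime] (hHA : Disjoint H A) (hx : x ∉ H ⊔ A) (hxp : x ^ p ∈ A) :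
    Disjoint H (A ⊔ zpowers x) := by
  rw [disjoint_def]
  rintro _ hwH hw
  obtain ⟨a, ha, _, ⟨m, rfl⟩, rfl⟩ := mem_sup.1 hw
  have hm : x ^ m ∈ H ⊔ A := by
    simpa using mul_mem (mem_sup_right (inv_mem ha)) (mem_sup_left hwH)
  obtain ⟨q, rfl⟩ := dvd_of_zpow_mem hx (mem_sup_right hxp) hm
  dsimp only at hwH ⊢
  rw [zpow_mul, zpow_natCast] at hwH ⊢
  exact disjoint_def.1 hHA hwH (mul_mem ha (zpow_mem hxp q))

end Subgroup

theorem dvd_of_pow_eq_zpow_mul [CommGroup G] [Finite G] {y x a : G} {A : Subgroup G} {p : ℕ}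
    {s : ℤ} (hy : orderOf y = Monoid.exponent G) (hyA : Disjoint (zpowers y) A) (ha : a ∈ A)
    (hp : p ∣ Monoid.exponent G) (hx : x ^ p = y ^ s * a) : (p : ℤ) ∣ s := by
  obtain ⟨n, hn⟩ := hp
  have hn0 : (n : ℤ) ≠ 0 :=
    Int.natCast_ne_zero.2 (right_ne_zero_of_mul (hn ▸ Monoid.exponent_ne_zero_of_finite))
  have hys : y ^ (s * n) = 1 := by
    refine disjoint_def.1 hyA (zpow_mem (mem_zpowers y) _) ?_
    have : y ^ (s * n) * a ^ n = 1 := by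
      rw [zpow_mul, zpow_natCast, ← mul_pow, ← hx, ← pow_mul, ← hn,
        Monoid.pow_exponent_eq_one]
    rw [eq_inv_of_mul_eq_one_left this]
    exact inv_mem (pow_mem ha n)
  have := orderOf_dvd_iff_zpow_eq_one.mpr hys
  rw [hy, hn, Nat.cast_mul] at this
  exact (mul_dvd_mul_iff_right hn0).1 this

theorem exists_isCompl_zpowers_of_orderOf_eq_exponent [CommGroup G] [Finite G] {y : G}
    (hy : orderOf y = Monoid.exponent G) : ∃ A : Subgroup G, IsCompl (zpowers y) A := by
  obtain ⟨A, hA, hmax⟩ := Set.Finite.exists_maximalFor id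
    {A : Subgroup G | Disjoint (zpowers y) A} (Set.toFinite _) ⟨⊥, disjoint_bot_right⟩
  refine ⟨A, hA, codisjoint_iff.2 ?_⟩
  by_contra hM
  obtain ⟨p, hp, x, hx, hxp⟩ := exists_prime_pow_mem_of_ne_top hM
  have : Fact p.Prime := ⟨hp⟩
  obtain ⟨_, ⟨s, rfl⟩, a, ha, hxpsa⟩ := mem_sup.1 hxp
  have hpx : p ∣ orderOf x := by
    exact_mod_cast dvd_of_zpow_mem hx hxp (m := orderOf x) (by simp)
  obtain ⟨t, rfl⟩ := dvd_of_pow_eq_zpow_mul hy hA ha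
    (hpx.trans (Monoid.order_dvd_exponent x)) hxpsa.symm
  set x' := x * (y ^ t)⁻¹
  have hx'p : x' ^ p = a := by
    rw [mul_pow, ← hxpsa, inv_pow, ← zpow_natCast (y ^ t), ← zpow_mul, mul_comm t,
      mul_inv_cancel_comm]
  have hx' : x' ∉ zpowers y ⊔ A := fun h ↦
    hx (by simpa [x'] using mul_mem h (mem_sup_left (zpow_mem (mem_zpowers y) t)))
  have hle := hmax (disjoint_sup_zpowers hA hx' (hx'p ▸ ha)) le_sup_left
  exact hx' (mem_sup_right (hle (mem_sup_right (mem_zpowers x'))))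

theorem isCompl_zpowers_mul [CommGroup G] {z v : G} {K : Subgroup G}
    (hzK : IsCompl (zpowers z) K) (hv : v ∈ K) (hvz : v ^ orderOf z = 1) :
    IsCompl (zpowers (z * v)) K := by
  constructor
  · rw [disjoint_def]
    rintro _ ⟨m, rfl⟩ hm
    dsimp only at hm ⊢
    rw [mul_zpow] at hm ⊢
    have hzm : z ^ m = 1 :=
      disjoint_def.1 hzK.disjoint (zpow_mem (mem_zpowers z) m)
        (by simpa using mul_mem hm (inv_mem (zpow_mem hv m)))
    obtain ⟨q, rfl⟩ := orderOf_dvd_iff_zpow_eq_one.2 hzm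
    rw [hzm, zpow_mul, zpow_natCast, hvz, one_zpow, one_mul]
  · rw [codisjoint_iff, eq_top_iff, ← hzK.sup_eq_top]
    refine sup_le ?_ le_sup_right
    rw [zpowers_le]
    simpa using mul_mem (mem_sup_left (mem_zpowers (z * v))) (mem_sup_right (inv_mem hv))

theorem eq_one_or_eq_pow_of_mem_zpowers_of_sq_eq_one [Group G] {g w : G} {n : ℕ}
    (hg : orderOf g = 2 * n) (hw : w ∈ zpowers g) (hw2 : w ^ 2 = 1) : w = 1 ∨ w = g ^ n := by
  obtain ⟨m, rfl⟩ := hw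
  dsimp only at hw2 ⊢
  have hgn : (g ^ n) ^ 2 = 1 := by rw [← pow_mul, mul_comm, ← hg, pow_orderOf_eq_one]
  obtain ⟨q, rfl⟩ : (n : ℤ) ∣ m := by
    have := orderOf_dvd_iff_zpow_eq_one.2 (by rwa [← zpow_natCast, ← zpow_mul] at hw2)
    rw [hg, Nat.cast_mul, mul_comm m] at this
    exact (mul_dvd_mul_iff_left two_ne_zero).1 this
  obtain ⟨r, rfl | rfl⟩ := Int.even_or_odd' q
  · left
    rw [zpow_mul, zpow_natCast, zpow_mul, zpow_ofNat, hgn, one_zpow]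
  · right
    rw [zpow_mul, zpow_natCast, zpow_add, zpow_mul, zpow_ofNat, hgn, one_zpow, one_mul, zpow_one]

theorem exists_pow_eq_of_mem_zpowers_of_sq_eq_one [Group G] {y u : G} {n : ℕ}
    (hn : 2 * n ∣ orderOf y) (hu : u ∈ zpowers y) (hu2 : u ^ 2 = 1) :
    ∃ v ∈ zpowers y, v ^ (2 * n) = 1 ∧ v ^ n = u := by
  obtain ⟨d, hd⟩ := hn
  rcases eq_one_or_eq_pow_of_mem_zpowers_of_sq_eq_one (hd.trans (mul_assoc 2 n d)) hu hu2
    with rfl | rfl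
  · exact ⟨1, one_mem _, one_pow _, one_pow _⟩
  · refine ⟨y ^ d, pow_mem (mem_zpowers y) d, ?_, by rw [← pow_mul, mul_comm]⟩
    rw [← pow_mul, mul_comm, ← hd, pow_orderOf_eq_one]

theorem exists_mul_mem_zpowers_isCompl [CommGroup G] {y₀ z u a : G} {K : Subgroup G}
    (hzK : IsCompl (zpowers z) K) (hy₀K : y₀ ∈ K) (hz : orderOf z ∣ orderOf y₀)
    (hu : u ∈ zpowers y₀) (hu2 : u ^ 2 = 1) (ha : a ∈ zpowers z) (ha2 : a ^ 2 = 1)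
    (ha1 : a ≠ 1) : ∃ y : G, u * a ∈ zpowers y ∧ IsCompl (zpowers y) K := by
  have : Fact (Nat.Prime 2) := ⟨Nat.prime_two⟩
  obtain ⟨n, hn⟩ : 2 ∣ orderOf z := orderOf_eq_prime ha2 ha1 ▸ orderOf_dvd_of_mem_zpowers ha
  have haz : a = z ^ n :=
    (eq_one_or_eq_pow_of_mem_zpowers_of_sq_eq_one hn ha ha2).resolve_left ha1
  obtain ⟨v, hv, hv2n, hvn⟩ := exists_pow_eq_of_mem_zpowers_of_sq_eq_one (hn ▸ hz) hu hu2
  refine ⟨z * v, ?_, isCompl_zpowers_mul hzK (zpowers_le.2 hy₀K hv) (hn ▸ hv2n)⟩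
  rw [← hvn, haz, mul_comm, ← mul_pow]
  exact pow_mem (mem_zpowers _) n

theorem exists_mem_zpowers_isCompl_of_sq_eq_one [CommGroup G] [Finite G] {c : G}
    (hc : c ^ 2 = 1) : ∃ (y : G) (A : Subgroup G), c ∈ zpowers y ∧ IsCompl (zpowers y) A := by
  induction hN : Nat.card G using Nat.strong_induction_on generalizing G with
  | _ N ih =>
  obtain ⟨y₀, hy₀⟩ := Monoid.exists_orderOf_eq_exponent (Monoid.ExponentExists.of_finite (G := G))
  obtain ⟨A₀, hA₀⟩ := exists_isCompl_zpowers_of_orderOf_eq_exponent hy₀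
  obtain ⟨u, hu, a, ha, rfl⟩ := mem_sup.1 (hA₀.sup_eq_top ▸ mem_top c)
  obtain ⟨hu2, ha2⟩ := disjoint_iff_mul_eq_one.1 hA₀.disjoint (pow_mem hu 2) (pow_mem ha 2)
    (by rwa [← mul_pow])
  by_cases ha1 : a = 1
  · exact ⟨y₀, A₀, by rwa [ha1, mul_one], hA₀⟩
  have : Nontrivial G := ⟨⟨a, 1, ha1⟩⟩
  have hA₀N : Nat.card A₀ < N := by
    rw [← hN, ← (isComplement'_of_isCompl hA₀).card_mul_card, Nat.card_zpowers, hy₀]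
    exact lt_mul_of_one_lt_left Nat.card_pos Monoid.one_lt_exponent
  obtain ⟨z, B, haz, hzB⟩ := ih _ hA₀N (c := ⟨a, ha⟩) (Subtype.ext ha2) rfl
  obtain ⟨hzB', hzBA₀⟩ := map_subtype_disjoint_and_sup_eq hzB
  rw [MonoidHom.map_zpowers] at hzB' hzBA₀
  have hzK : IsCompl (zpowers (z : G)) (B.map A₀.subtype ⊔ zpowers y₀) :=
    hzB'.isCompl_sup_right_of_isCompl_sup_left (by rw [hzBA₀]; exact hA₀.symm)
  have haz' : a ∈ zpowers (z : G) := by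
    simpa [MonoidHom.map_zpowers] using mem_map_of_mem A₀.subtype haz
  obtain ⟨y, hy, hyK⟩ := exists_mul_mem_zpowers_isCompl hzK (mem_sup_right (mem_zpowers y₀))
    (hy₀ ▸ Monoid.order_dvd_exponent _) hu hu2 haz' ha2 ha1
  exact ⟨y, _, hy, hyK⟩

end

theorem exists_cyclic_direct_factor_containing_involution_general
    (G : Type*) [CommGroup G] [Finite G]
    (c : G) (hc : orderOf c = 2) :
    ∃ (y : G) (A : Subgroup G),
      c ∈ Subgroup.zpowers y ∧
      Subgroup.zpowers y ⊓ A = ⊥ ∧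
      ∀ g : G, ∃! p : Subgroup.zpowers y × A, (p.1 : G) * (p.2 : G) = g := by
  obtain ⟨y, A, hcy, hyA⟩ := exists_mem_zpowers_isCompl_of_sq_eq_one (hc ▸ pow_orderOf_eq_one c)
  exact ⟨y, A, hcy, hyA.inf_eq_bot, (isComplement'_of_isCompl hyA).existsUnique⟩

/-- Lemma: in a finite abelian 2-group `G`, any element `c` of order 2 lies in
a cyclic direct factor: there are `y ∈ G` and a subgroup `A ≤ G` with
`⟨y⟩ ∩ A = 1`, every element of `G` uniquely a product of an element of `⟨y⟩`
and an element of `A`, and `c ∈ ⟨y⟩`. -/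
theorem exists_cyclic_direct_factor_containing_involution
    (G : Type*) [CommGroup G] [Finite G] (hG : ∃ n : ℕ, Nat.card G = 2 ^ n)
    (c : G) (hc : orderOf c = 2) :
    ∃ (y : G) (A : Subgroup G),
      c ∈ Subgroup.zpowers y ∧
      Subgroup.zpowers y ⊓ A = ⊥ ∧
      ∀ g : G, ∃! p : Subgroup.zpowers y × A, (p.1 : G) * (p.2 : G) = g :=
  exists_cyclic_direct_factor_containing_involution_general G c hc
end

section
/- For every r ≥ 3, the group G = Q_{2^r} × C₂ × C₂ × C₂ satisfies α(G) ≤ 2^{r+1} + 6; in particular α(G) ≤ |G| = 2^{r+3}. -/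
/-- `graphAlpha G` is the minimum number of vertices of a finite simple graph whose
automorphism group is isomorphic to `G`. -/
noncomputable def graphAlpha (G : Type*) [Group G] : ℕ :=
  sInf {n : ℕ | ∃ Γ : SimpleGraph (Fin n), Nonempty ((Γ ≃g Γ) ≃* G)}

/-- The cyclic group of order `n`. -/
abbrev Cyc (n : ℕ) := Multiplicative (ZMod n)

/-!
Write `a = a 1` and `x = xa 0` for the generators of `Q = QuaternionGroup m`, so that
`x⁻¹ = xa m`. On `Q × {0, 1}` (encoded as `Q × Bool`) take the graph in which
`(g, 0) ~ (g s, 0)` for `s = a^{±1}, x^{±1}`, `(g, 1) ~ (g x^{±1}, 1)` and `(g, 0) ~ (g t, 1)`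
for `t ∈ {1, x, x a⁻¹}`. Left multiplication by `Q` acts by automorphisms, and degrees (`7` on
layer `0`, `5` on layer `1`) show that every automorphism preserves the layers. An automorphism
fixing `(1, 0)` must fix `(x, 1)`, the only layer-`1` neighbour of `(1, 0)` sharing two layer-`0`
neighbours with it; then `(1, 1)`, `(x a⁻¹, 1)`, and through them `(a, 0)` and `(x, 0)`.
Translating this along `Q` shows that it fixes everything, so the automorphism group is
exactly `Q`.

Adding a disjoint copy of `K₂ ⊔ (K₄ minus an edge)`, whose automorphism group is `C₂³` and
whose degrees are `1, 2, 3`, gives a graph on `8m + 6` vertices with automorphism group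
`Q × C₂³`; for `m = 2^(r-2)` this is `2^(r+1) + 6` vertices.
-/

namespace SimpleGraph

variable {V W : Type*} {G : SimpleGraph V} {H : SimpleGraph W}

theorem Iso.adj_of_apply_eq {G' : SimpleGraph W} (φ : G ≃g G') {u v : V} {u' v' : W}
    (hu : φ u = u') (hv : φ v = v') (h : G.Adj u v) : G'.Adj u' v' :=
  hu ▸ hv ▸ φ.map_adj_iff.mpr h

def Iso.autCongr (e : G ≃g H) : (G ≃g G) ≃* (H ≃g H) where
  toFun φ := e.symm.trans (φ.trans e)
  invFun ψ := e.trans (ψ.trans e.symm)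
  left_inv φ := RelIso.ext fun v => by simp
  right_inv ψ := RelIso.ext fun v => by simp
  map_mul' φ ψ := RelIso.ext fun v => by simp [RelIso.mul_apply]

def Iso.sumCongrHom : (G ≃g G) × (H ≃g H) →* (G ⊕g H ≃g G ⊕g H) where
  toFun p := p.1.sumCongr p.2
  map_one' := RelIso.ext fun v => by cases v <;> rfl
  map_mul' _ _ := RelIso.ext fun v => by cases v <;> rfl

theorem Iso.sumCongrHom_injective :
    Function.Injective (Iso.sumCongrHom (G := G) (H := H)) := by
  rintro ⟨φ₁, φ₂⟩ ⟨ψ₁, ψ₂⟩ h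
  have h₁ v := Sum.inl_injective (RelIso.ext_iff.mp h (.inl v))
  have h₂ w := Sum.inr_injective (RelIso.ext_iff.mp h (.inr w))
  exact Prod.ext (RelIso.ext h₁) (RelIso.ext h₂)

theorem Iso.sumCongrHom_surjective [Finite V] [Finite W]
    (h : ∀ (φ : G ⊕g H ≃g G ⊕g H) v, (φ (.inl v)).isLeft) :
    Function.Surjective (Iso.sumCongrHom (G := G) (H := H)) := by
  intro φ
  obtain ⟨⟨σ₁, σ₂⟩, hσ⟩ := Equiv.Perm.mem_sumCongrHom_range_of_perm_mapsTo_inl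
    (σ := φ.toEquiv) (by
      rintro _ ⟨v, rfl⟩
      obtain ⟨w, hw⟩ := Sum.isLeft_iff.mp (h φ v)
      exact ⟨w, hw.symm⟩)
  have hφ x : φ x = Sum.map σ₁ σ₂ x := (congrArg (· x) hσ).symm
  refine ⟨⟨⟨σ₁, fun {v v'} => ?_⟩, ⟨σ₂, fun {w w'} => ?_⟩⟩, RelIso.ext fun x => (hφ x).symm⟩
  · simpa [hφ] using φ.map_adj_iff (v := .inl v) (w := .inl v')
  · simpa [hφ] using φ.map_adj_iff (v := .inr w) (w := .inr w')

noncomputable def Iso.autSumEquiv [Finite V] [Finite W]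
    (h : ∀ (φ : G ⊕g H ≃g G ⊕g H) v, (φ (.inl v)).isLeft) :
    (G ⊕g H ≃g G ⊕g H) ≃* (G ≃g G) × (H ≃g H) :=
  (MulEquiv.ofBijective _ ⟨sumCongrHom_injective, sumCongrHom_surjective h⟩).symm

theorem degree_sum_inl (v : V) [Fintype ((G ⊕g H).neighborSet (.inl v))]
    [Fintype (G.neighborSet v)] : (G ⊕g H).degree (.inl v) = G.degree v := by
  rw [← card_neighborSet_eq_degree, ← card_neighborSet_eq_degree]
  exact Fintype.card_congr <|
    (Equiv.setCongr (neighborSet_sum_inl v)).trans (Equiv.Set.image _ _ Sum.inl_injective).symm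

theorem degree_sum_inr (w : W) [Fintype ((G ⊕g H).neighborSet (.inr w))]
    [Fintype (H.neighborSet w)] : (G ⊕g H).degree (.inr w) = H.degree w := by
  rw [← card_neighborSet_eq_degree, ← card_neighborSet_eq_degree]
  exact Fintype.card_congr <|
    (Equiv.setCongr (neighborSet_sum_inr w)).trans (Equiv.Set.image _ _ Sum.inr_injective).symm

theorem Iso.isLeft_apply_inl_of_degree_ne [Fintype V] [Fintype W] [DecidableRel G.Adj]
    [DecidableRel H.Adj] (h : ∀ v w, G.degree v ≠ H.degree w) (φ : G ⊕g H ≃g G ⊕g H) (v : V) :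
    (φ (.inl v)).isLeft := by
  classical
  cases hφ : φ (.inl v) with
  | inl => rfl
  | inr w =>
    have := φ.degree_eq (.inl v)
    rw [hφ, degree_sum_inl, degree_sum_inr] at this
    exact absurd this.symm (h v w)

end SimpleGraph

theorem graphAlpha_le_card {G V : Type*} [Group G] [Fintype V] (Γ : SimpleGraph V)
    (e : (Γ ≃g Γ) ≃* G) : graphAlpha G ≤ Fintype.card V :=
  Nat.sInf_le ⟨Γ.overFin rfl, ⟨(Γ.overFinIso rfl).autCongr.symm.trans e⟩⟩

namespace SimpleGraph

variable {M ι : Type*} [Group M] (S : ι → ι → Set M)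

def multiCayley : SimpleGraph (M × ι) :=
  fromRel fun u v => u.1⁻¹ * v.1 ∈ S u.2 v.2

theorem multiCayley_adj {g h : M} {i j : ι} :
    (multiCayley S).Adj (g, i) (h, j) ↔ (g, i) ≠ (h, j) ∧ (g⁻¹ * h ∈ S i j ∨ h⁻¹ * g ∈ S j i) :=
  Iff.rfl

theorem multiCayley_adj_mul_left (q g h : M) (i j : ι) :
    (multiCayley S).Adj (q * g, i) (q * h, j) ↔ (multiCayley S).Adj (g, i) (h, j) := by
  simp [multiCayley_adj, mul_assoc]

theorem multiCayley_adj_iff_adj_one (g h : M) (i j : ι) :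
    (multiCayley S).Adj (g, i) (h, j) ↔ (multiCayley S).Adj (1, i) (g⁻¹ * h, j) := by
  rw [← multiCayley_adj_mul_left S g⁻¹, inv_mul_cancel]

namespace multiCayley

def mulLeft : M →* (multiCayley S ≃g multiCayley S) where
  toFun q := ⟨(Equiv.mulLeft q).prodCongr (Equiv.refl ι),
    fun {u v} => multiCayley_adj_mul_left S q u.1 v.1 u.2 v.2⟩
  map_one' := RelIso.ext fun _ => by simp
  map_mul' _ _ := RelIso.ext fun _ => Prod.ext (mul_assoc _ _ _) rfl

@[simp] theorem mulLeft_apply (q : M) (u : M × ι) : mulLeft S q u = (q * u.1, u.2) := rfl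

theorem mulLeft_injective [Nonempty ι] : Function.Injective (mulLeft S) := by
  refine (injective_iff_map_eq_one _).mpr fun q hq => ?_
  obtain ⟨i⟩ := ‹Nonempty ι›
  simpa using congrArg Prod.fst (RelIso.ext_iff.mp hq (1, i))

variable {S}

theorem apply_mul_eq_of_forall {i j : ι} {s : M}
    (hs : ∀ φ : multiCayley S ≃g multiCayley S, φ (1, i) = (1, i) → φ (s, j) = (s, j))
    (φ : multiCayley S ≃g multiCayley S) {g : M} (hg : φ (g, i) = (g, i)) :
    φ (g * s, j) = (g * s, j) := by
  -- conjugating by left multiplication with `g` moves the fixed point `(g, i)` to `(1, i)`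
  have := hs ((mulLeft S g)⁻¹ * φ * mulLeft S g) (by simp [RelIso.mul_apply, hg, ← map_inv])
  simpa [RelIso.mul_apply, ← map_inv] using congrArg (mulLeft S g) this

end multiCayley

end SimpleGraph

open SimpleGraph

namespace QuaternionGroup

variable {m : ℕ}

@[simp] theorem inv_a (i : ZMod (2 * m)) : (a i)⁻¹ = a (-i) := rfl

@[simp] theorem inv_xa (i : ZMod (2 * m)) : (xa i)⁻¹ = xa ((m : ZMod (2 * m)) + i) := rfl

/-- What `grind` needs to tell apart the elements `a i`, `xa i` occurring below. -/
theorem index_facts [Fact (1 < m)] : (1 : ZMod (2 * m)) ≠ 0 ∧ (2 : ZMod (2 * m)) ≠ 0 ∧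
    (m : ZMod (2 * m)) ≠ 0 ∧ (m : ZMod (2 * m)) + 1 ≠ 0 ∧ (m : ZMod (2 * m)) - 1 ≠ 0 ∧
    (m : ZMod (2 * m)) + m = 0 := by
  have hm : 1 < m := Fact.out
  have natCast_ne_zero (k : ℕ) (h0 : 0 < k) (hk : k < 2 * m) : (k : ZMod (2 * m)) ≠ 0 := by
    rw [Ne, ZMod.natCast_eq_zero_iff]
    exact fun hd => absurd (Nat.le_of_dvd h0 hd) (by omega)
  refine ⟨by exact_mod_cast natCast_ne_zero 1 (by omega) (by omega),
    by exact_mod_cast natCast_ne_zero 2 (by omega) (by omega),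
    natCast_ne_zero m (by omega) (by omega),
    by exact_mod_cast natCast_ne_zero (m + 1) (by omega) (by omega), ?_, ?_⟩
  · have := natCast_ne_zero (m - 1) (by omega) (by omega)
    rwa [Nat.cast_sub (by omega), Nat.cast_one] at this
  · have : ((2 * m : ℕ) : ZMod (2 * m)) = 0 := ZMod.natCast_self _
    push_cast at this
    linear_combination this

variable (m) in
def biCayleyConn : Bool → Bool → Set (QuaternionGroup m)
  | false, false => {a 1, xa 0}
  | true, true => {xa 0}
  | false, true => {1, xa 0, xa (-1)}
  | true, false => ∅

variable (m) in
abbrev biCayleyGraph : SimpleGraph (QuaternionGroup m × Bool) :=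
  multiCayley (biCayleyConn m)

theorem adj_false_true {g h : QuaternionGroup m} :
    (biCayleyGraph m).Adj (g, false) (h, true) ↔
      g⁻¹ * h = 1 ∨ g⁻¹ * h = xa 0 ∨ g⁻¹ * h = xa (-1) := by
  rw [multiCayley_adj_iff_adj_one, multiCayley_adj]
  simp [biCayleyConn]

variable [Fact (1 < m)]

theorem adj_false_false {g h : QuaternionGroup m} :
    (biCayleyGraph m).Adj (g, false) (h, false) ↔
      g⁻¹ * h = a 1 ∨ g⁻¹ * h = a (-1) ∨ g⁻¹ * h = xa 0 ∨ g⁻¹ * h = xa m := by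
  have := index_facts (m := m)
  rw [multiCayley_adj_iff_adj_one, multiCayley_adj]
  generalize g⁻¹ * h = k
  cases k <;> simp [biCayleyConn, one_def, -a_zero] <;> grind

theorem adj_true_false {g h : QuaternionGroup m} :
    (biCayleyGraph m).Adj (g, true) (h, false) ↔
      g⁻¹ * h = 1 ∨ g⁻¹ * h = xa m ∨ g⁻¹ * h = xa (m - 1) := by
  have := index_facts (m := m)
  rw [multiCayley_adj_iff_adj_one, multiCayley_adj]
  generalize g⁻¹ * h = k
  cases k <;> simp [biCayleyConn, one_def, -a_zero]
  grind

theorem adj_true_true {g h : QuaternionGroup m} :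
    (biCayleyGraph m).Adj (g, true) (h, true) ↔ g⁻¹ * h = xa 0 ∨ g⁻¹ * h = xa m := by
  have := index_facts (m := m)
  rw [multiCayley_adj_iff_adj_one, multiCayley_adj]
  generalize g⁻¹ * h = k
  cases k <;> simp [biCayleyConn, one_def, -a_zero]
  grind

noncomputable instance : DecidableRel (biCayleyGraph m).Adj := Classical.decRel _

theorem degree_mk_false (g : QuaternionGroup m) : (biCayleyGraph m).degree (g, false) = 7 := by
  have := index_facts (m := m)
  have : (biCayleyGraph m).neighborFinset (g, false) =
      ([(a 1, false), (a (-1), false), (xa 0, false), (xa m, false), (1, true), (xa 0, true),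
        (xa (-1), true)].map fun v => (g * v.1, v.2)).toFinset := by
    ext ⟨h, _ | _⟩ <;> simp [adj_false_false, adj_false_true, inv_mul_eq_iff_eq_mul, eq_comm]
  rw [← card_neighborFinset_eq_degree, this, List.toFinset_card_of_nodup]
  · rfl
  simp [one_def, -a_zero]
  grind

theorem degree_mk_true (g : QuaternionGroup m) : (biCayleyGraph m).degree (g, true) = 5 := by
  have := index_facts (m := m)
  have : (biCayleyGraph m).neighborFinset (g, true) =
      ([(1, false), (xa m, false), (xa (m - 1), false), (xa 0, true), (xa m, true)].map
        fun v => (g * v.1, v.2)).toFinset := by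
    ext ⟨h, _ | _⟩ <;> simp [adj_true_false, adj_true_true, inv_mul_eq_iff_eq_mul, eq_comm]
  rw [← card_neighborFinset_eq_degree, this, List.toFinset_card_of_nodup]
  · rfl
  simp [one_def, -a_zero]
  grind

theorem degree_biCayleyGraph (v : QuaternionGroup m × Bool) :
    (biCayleyGraph m).degree v = cond v.2 5 7 := by
  obtain ⟨g, _ | _⟩ := v
  exacts [degree_mk_false g, degree_mk_true g]

theorem exists_apply_eq_mk (φ : biCayleyGraph m ≃g biCayleyGraph m) (g : QuaternionGroup m)
    (l : Bool) : ∃ h, φ (g, l) = (h, l) := by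
  refine ⟨(φ (g, l)).1, Prod.ext rfl ?_⟩
  have := φ.degree_eq (g, l)
  rw [degree_biCayleyGraph, degree_biCayleyGraph] at this
  revert this
  cases (φ (g, l)).2 <;> cases l <;> simp

theorem eq_xa_m_of_adj_of_adj_one_true {h : QuaternionGroup m}
    (h₀ : (biCayleyGraph m).Adj (1, false) (h, false))
    (h₁ : (biCayleyGraph m).Adj (1, true) (h, false)) : h = xa m := by
  have := index_facts (m := m)
  rw [adj_false_false] at h₀
  rw [adj_true_false] at h₁
  simp only [inv_one, one_mul] at h₀
  rcases h₀ with rfl | rfl | rfl | rfl <;> simp at h₁ <;> grind [one_def]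

theorem eq_a_one_of_adj_of_adj_xa_neg_one {h : QuaternionGroup m}
    (h₀ : (biCayleyGraph m).Adj (1, false) (h, false))
    (h₁ : (biCayleyGraph m).Adj (xa (-1), true) (h, false)) : h = a 1 := by
  have := index_facts (m := m)
  rw [adj_false_false] at h₀
  rw [adj_true_false] at h₁
  simp only [inv_one, one_mul] at h₀
  rcases h₀ with rfl | rfl | rfl | rfl <;> simp at h₁ <;> grind [one_def]

theorem eq_xa_zero_or_eq_a_neg_one_of_adj_of_adj_xa_zero {h : QuaternionGroup m}
    (h₀ : (biCayleyGraph m).Adj (1, false) (h, false))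
    (h₁ : (biCayleyGraph m).Adj (xa 0, true) (h, false)) : h = xa 0 ∨ h = a (-1) := by
  have := index_facts (m := m)
  rw [adj_false_false] at h₀
  rw [adj_true_false] at h₁
  simp only [inv_one, one_mul] at h₀
  rcases h₀ with rfl | rfl | rfl | rfl <;> simp at h₁ <;> grind [one_def]

section rigidity

variable (φ : biCayleyGraph m ≃g biCayleyGraph m)

theorem apply_xa_zero_true (hφ : φ (1, false) = (1, false)) : φ (xa 0, true) = (xa 0, true) := by
  obtain ⟨w, hw⟩ := exists_apply_eq_mk φ (xa 0) true
  obtain ⟨h₁, e₁⟩ := exists_apply_eq_mk φ (xa 0) false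
  obtain ⟨h₂, e₂⟩ := exists_apply_eq_mk φ (a (-1)) false
  have hne : h₁ ≠ h₂ := by
    rintro rfl
    simpa using φ.injective (e₁.trans e₂.symm)
  have o_w := φ.adj_of_apply_eq hφ hw (by simp [adj_false_true])
  have o_1 := φ.adj_of_apply_eq hφ e₁ (by simp [adj_false_false])
  have o_2 := φ.adj_of_apply_eq hφ e₂ (by simp [adj_false_false])
  have w_1 := φ.adj_of_apply_eq hw e₁ (by simp [adj_true_false])
  have w_2 := φ.adj_of_apply_eq hw e₂ (by simp [adj_true_false, sub_eq_add_neg])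
  rw [adj_false_true, inv_one, one_mul] at o_w
  rcases o_w with rfl | rfl | rfl
  · exact absurd ((eq_xa_m_of_adj_of_adj_one_true o_1 w_1).trans
      (eq_xa_m_of_adj_of_adj_one_true o_2 w_2).symm) hne
  · exact hw
  · exact absurd ((eq_a_one_of_adj_of_adj_xa_neg_one o_1 w_1).trans
      (eq_a_one_of_adj_of_adj_xa_neg_one o_2 w_2).symm) hne

theorem apply_one_true (hφ : φ (1, false) = (1, false)) : φ (1, true) = (1, true) := by
  obtain ⟨w, hw⟩ := exists_apply_eq_mk φ 1 true
  have o_w := φ.adj_of_apply_eq hφ hw (by simp [adj_false_true])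
  have x_w := φ.adj_of_apply_eq (apply_xa_zero_true φ hφ) hw (by simp [adj_true_true])
  rw [adj_false_true, inv_one, one_mul] at o_w
  rcases o_w with rfl | rfl | rfl
  · exact hw
  · exact absurd rfl x_w.ne
  · simp [adj_true_true] at x_w

theorem apply_xa_neg_one_true (hφ : φ (1, false) = (1, false)) :
    φ (xa (-1), true) = (xa (-1), true) := by
  obtain ⟨w, hw⟩ := exists_apply_eq_mk φ (xa (-1)) true
  have o_w := φ.adj_of_apply_eq hφ hw (by simp [adj_false_true])
  rw [adj_false_true, inv_one, one_mul] at o_w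
  rcases o_w with rfl | rfl | rfl
  · exact absurd (φ.injective (hw.trans (apply_one_true φ hφ).symm)) (by simp [one_def, -a_zero])
  · exact absurd (φ.injective (hw.trans (apply_xa_zero_true φ hφ).symm))
      (by simpa using (index_facts (m := m)).1)
  · exact hw

theorem apply_a_one_false (hφ : φ (1, false) = (1, false)) : φ (a 1, false) = (a 1, false) := by
  obtain ⟨h, e⟩ := exists_apply_eq_mk φ (a 1) false
  have o_h := φ.adj_of_apply_eq hφ e (by simp [adj_false_false])
  have w_h := φ.adj_of_apply_eq (apply_xa_neg_one_true φ hφ) e (by simp [adj_true_false])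
  rw [e, eq_a_one_of_adj_of_adj_xa_neg_one o_h w_h]

variable {φ}

theorem apply_mul_a_false {g : QuaternionGroup m} (hg : φ (g, false) = (g, false))
    (i : ZMod (2 * m)) : φ (g * a i, false) = (g * a i, false) := by
  obtain ⟨k, rfl⟩ := ZMod.natCast_zmod_surjective i
  induction k with
  | zero => simpa using hg
  | succ k ih =>
    have := multiCayley.apply_mul_eq_of_forall apply_a_one_false φ ih
    rwa [mul_assoc, a_mul_a, ← Nat.cast_succ] at this

theorem apply_xa_zero_false (hφ : φ (1, false) = (1, false)) :
    φ (xa 0, false) = (xa 0, false) := by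
  obtain ⟨h, e⟩ := exists_apply_eq_mk φ (xa 0) false
  have o_h := φ.adj_of_apply_eq hφ e (by simp [adj_false_false])
  have x_h := φ.adj_of_apply_eq (apply_xa_zero_true φ hφ) e (by simp [adj_true_false])
  rcases eq_xa_zero_or_eq_a_neg_one_of_adj_of_adj_xa_zero o_h x_h with rfl | rfl
  · exact e
  · have := apply_mul_a_false hφ (-1)
    rw [one_mul] at this
    simpa using φ.injective (e.trans this.symm)

theorem eq_one_of_apply_one_false (hφ : φ (1, false) = (1, false)) : φ = 1 := by
  have layer_zero (g : QuaternionGroup m) : φ (g, false) = (g, false) := by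
    cases g with
    | a i => simpa using apply_mul_a_false hφ i
    | xa i => simpa using apply_mul_a_false (apply_xa_zero_false hφ) i
  refine RelIso.ext fun ⟨g, l⟩ => ?_
  cases l
  · exact layer_zero g
  · simpa using multiCayley.apply_mul_eq_of_forall apply_one_true φ (layer_zero g)

end rigidity

theorem mulLeft_surjective : Function.Surjective (multiCayley.mulLeft (biCayleyConn m)) := by
  intro φ
  obtain ⟨g, hg⟩ := exists_apply_eq_mk φ 1 false
  refine ⟨g, inv_mul_eq_one.mp (eq_one_of_apply_one_false ?_)⟩
  rw [RelIso.mul_apply, hg, ← map_inv, multiCayley.mulLeft_apply, inv_mul_cancel]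

variable (m) in
noncomputable def autBiCayleyGraphEquiv :
    (biCayleyGraph m ≃g biCayleyGraph m) ≃* QuaternionGroup m :=
  (MulEquiv.ofBijective _ ⟨multiCayley.mulLeft_injective _, mulLeft_surjective⟩).symm

end QuaternionGroup

/-- `K₂ ⊔ (K₄ minus an edge)`: the three summands are the `K₂`, the two ends of the missing edge,
and the remaining two vertices of the `K₄`. -/
def threeSwapGraph : SimpleGraph (ZMod 2 ⊕ ZMod 2 ⊕ ZMod 2) where
  Adj
    | .inl e, .inl f => e ≠ f
    | .inr (.inl _), .inr (.inr _) | .inr (.inr _), .inr (.inl _) => True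
    | .inr (.inr e), .inr (.inr f) => e ≠ f
    | _, _ => False
  symm := ⟨by rintro (_ | _ | _) (_ | _ | _) <;> simp [eq_comm]⟩
  loopless := ⟨by rintro (_ | _ | _) <;> simp⟩

instance : DecidableRel threeSwapGraph.Adj
  | .inl e, .inl f => inferInstanceAs (Decidable (e ≠ f))
  | .inr (.inl _), .inr (.inr _) | .inr (.inr _), .inr (.inl _) => isTrue trivial
  | .inr (.inr e), .inr (.inr f) => inferInstanceAs (Decidable (e ≠ f))
  | .inl _, .inr _ | .inr (.inl _), .inl _ | .inr (.inr _), .inl _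
  | .inr (.inl _), .inr (.inl _) => isFalse fun h => h

theorem exists_forall_apply_eq_add {α : Type*} {ι : ZMod 2 → α} (hι : Function.Injective ι)
    {f : α → α} (hf : Function.Injective f) (h : ∀ e, ∃ e', f (ι e) = ι e') :
    ∃ c, ∀ e, f (ι e) = ι (e + c) := by
  obtain ⟨c, hc⟩ := h 0
  refine ⟨c, fun e => ?_⟩
  obtain ⟨e', he'⟩ := h e
  have key : e' = c ↔ e = 0 := by rw [← hι.eq_iff, ← he', ← hc, hf.eq_iff, hι.eq_iff]
  have parity : ∀ e e' c : ZMod 2, (e' = c ↔ e = 0) → e' = e + c := by decide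
  rw [he', parity e e' c key]

namespace threeSwapGraph

theorem degree_le_three : ∀ v, threeSwapGraph.degree v ≤ 3 := by decide

theorem exists_apply_eq (φ : threeSwapGraph ≃g threeSwapGraph)
    {ι : ZMod 2 → ZMod 2 ⊕ ZMod 2 ⊕ ZMod 2}
    (hι : ∀ e v, threeSwapGraph.degree v = threeSwapGraph.degree (ι e) → ∃ e', v = ι e')
    (e : ZMod 2) : ∃ e', φ (ι e) = ι e' :=
  hι e _ (φ.degree_eq _)

def translate :
    Multiplicative (ZMod 2 × ZMod 2 × ZMod 2) →* (threeSwapGraph ≃g threeSwapGraph) where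
  toFun c := ⟨(Equiv.addRight c.toAdd.1).sumCongr
      ((Equiv.addRight c.toAdd.2.1).sumCongr (Equiv.addRight c.toAdd.2.2)),
    by rintro (_ | _ | _) (_ | _ | _) <;> simp [threeSwapGraph]⟩
  map_one' := RelIso.ext fun v => by rcases v with _ | _ | _ <;> simp
  map_mul' c d := RelIso.ext fun v => by
    rcases v with _ | _ | _ <;> simp [RelIso.mul_apply] <;> ring

theorem translate_injective : Function.Injective translate := by
  refine (injective_iff_map_eq_one _).mpr fun c hc => ?_
  have h₀ := RelIso.ext_iff.mp hc (.inl 0)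
  have h₁ := RelIso.ext_iff.mp hc (.inr (.inl 0))
  have h₂ := RelIso.ext_iff.mp hc (.inr (.inr 0))
  simp [translate] at h₀ h₁ h₂
  exact Multiplicative.toAdd.injective (Prod.ext h₀ (Prod.ext h₁ h₂))

theorem translate_surjective : Function.Surjective translate := by
  intro φ
  obtain ⟨c₀, h₀⟩ := exists_forall_apply_eq_add Sum.inl_injective φ.injective
    (exists_apply_eq φ (by decide))
  obtain ⟨c₁, h₁⟩ := exists_forall_apply_eq_add (Sum.inr_injective.comp Sum.inl_injective)
    φ.injective (exists_apply_eq φ (by decide))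
  obtain ⟨c₂, h₂⟩ := exists_forall_apply_eq_add (Sum.inr_injective.comp Sum.inr_injective)
    φ.injective (exists_apply_eq φ (by decide))
  refine ⟨.ofAdd (c₀, c₁, c₂), RelIso.ext fun v => ?_⟩
  rcases v with e | e | e
  exacts [(h₀ e).symm, (h₁ e).symm, (h₂ e).symm]

noncomputable def autEquiv :
    (threeSwapGraph ≃g threeSwapGraph) ≃* Multiplicative (ZMod 2 × ZMod 2 × ZMod 2) :=
  (MulEquiv.ofBijective _ ⟨translate_injective, translate_surjective⟩).symm

end threeSwapGraph

open QuaternionGroup in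
theorem graphAlpha_quaternionGroup_prod_le (m : ℕ) [Fact (1 < m)] :
    graphAlpha (QuaternionGroup m × Multiplicative (ZMod 2 × ZMod 2 × ZMod 2)) ≤ 8 * m + 6 := by
  have hdeg v w : (biCayleyGraph m).degree v ≠ threeSwapGraph.degree w := by
    have := threeSwapGraph.degree_le_three w
    rw [degree_biCayleyGraph]
    cases v.2 <;> simp <;> omega
  have e := (Iso.autSumEquiv (Iso.isLeft_apply_inl_of_degree_ne hdeg)).trans
    ((autBiCayleyGraphEquiv m).prodCongr threeSwapGraph.autEquiv)
  refine (graphAlpha_le_card _ e).trans_eq ?_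
  simp [Fintype.card_sum, QuaternionGroup.card, ZMod.card]
  ring

/-- For `r ≥ 3`, the group `G = Q_{2^r} × C₂ × C₂ × C₂` satisfies
`α(G) ≤ 2^(r+1) + 6`; in particular `α(G) ≤ |G| = 2^(r+3)`. Here
`Q_{2^r} = QuaternionGroup (2 ^ (r - 2))`. -/
theorem alpha_quaternion_times_elementary_abelian (r : ℕ) (hr : 3 ≤ r) :
    graphAlpha (QuaternionGroup (2 ^ (r - 2)) ×
        Multiplicative (ZMod 2 × ZMod 2 × ZMod 2)) ≤ 2 ^ (r + 1) + 6 ∧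
    Nat.card (QuaternionGroup (2 ^ (r - 2)) ×
        Multiplicative (ZMod 2 × ZMod 2 × ZMod 2)) = 2 ^ (r + 3) ∧
    graphAlpha (QuaternionGroup (2 ^ (r - 2)) ×
        Multiplicative (ZMod 2 × ZMod 2 × ZMod 2)) ≤
      Nat.card (QuaternionGroup (2 ^ (r - 2)) ×
        Multiplicative (ZMod 2 × ZMod 2 × ZMod 2)) := by
  have : Fact (1 < 2 ^ (r - 2)) := ⟨Nat.one_lt_two_pow (by omega)⟩
  have hpow (k : ℕ) : 2 ^ (r - 2 + k) = 2 ^ (r - 2) * 2 ^ k := pow_add _ _ _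
  have hα : graphAlpha (QuaternionGroup (2 ^ (r - 2)) ×
      Multiplicative (ZMod 2 × ZMod 2 × ZMod 2)) ≤ 2 ^ (r + 1) + 6 := by
    have := graphAlpha_quaternionGroup_prod_le (2 ^ (r - 2))
    rwa [show r + 1 = r - 2 + 3 by omega, hpow, mul_comm]
  have hcard : Nat.card (QuaternionGroup (2 ^ (r - 2)) ×
      Multiplicative (ZMod 2 × ZMod 2 × ZMod 2)) = 2 ^ (r + 3) := by
    rw [Nat.card_eq_fintype_card, Fintype.card_prod, QuaternionGroup.card,
      show r + 3 = r - 2 + 5 by omega, hpow]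
    simp [ZMod.card]
    ring
  refine ⟨hα, hcard, hα.trans ?_⟩
  have : 2 ≤ 2 ^ (r + 1) := Nat.le_self_pow (by omega) 2
  calc 2 ^ (r + 1) + 6 ≤ 2 ^ (r + 1) * 4 := by omega
    _ = _ := by rw [hcard]; ring
end

section
/- Let q be an odd prime or q = 1, let r ≥ 1, and let G be the dicyclic group of order 2^{r+1} q (so G = Dic_{2^{r-1} q}). Let Γ be a finite simple graph whose automorphism group is isomorphic to G, and let G act on the vertex set V(Γ) via a fixed isomorphism G ≅ Aut(Γ). If every orbit of this action has size at most max{2^{r+1}, 2^r q}, then there exist at least two distinct orbits of size exactly 2^{r+1}. -/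
/-- The orbit of a vertex `v` under the action of `G` on the vertices of `Γ`
induced by an isomorphism `e : G ≃* Aut(Γ)`. -/
def autOrbit {G V : Type*} [Group G] {Γ : SimpleGraph V}
    (e : G ≃* (Γ ≃g Γ)) (v : V) : Set V :=
  Set.range fun g : G => e g v

/-!
In `Dic_n` the central element `z = a n` is the only involution, so a stabilizer not containing
`z` has odd order and hence divides `q`; the bound on the orbit sizes then forces every orbit on
which `z` acts nontrivially to have size `2^(r+1)`. Such orbits exist because the action is
faithful, and there are at least two of them: if all vertices moved by `z` lay in a single orbit
`G • v`, the map acting as `z` on `(G ∖ A) • v`, for `A` the cyclic subgroup of index two, and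
trivially elsewhere would be a graph automorphism, i.e. an element `g` of `G`. This `g` fixes
`v`, hence lies in `A`, and agrees with `z` at `x • v` for `x ∉ A`; as `x⁻¹ g x = g⁻¹`, this
forces `z` to fix `v`.
-/

namespace SimpleGraph.Iso

variable {V : Type*} {Γ : SimpleGraph V}

def piecewise (f : Γ ≃g Γ) (X : Set V) [DecidablePred (· ∈ X)] (hX : ∀ v, f v ∈ X ↔ v ∈ X)
    (hadj : ∀ u ∈ X, ∀ w ∉ X, Γ.Adj (f u) w ↔ Γ.Adj u w) : Γ ≃g Γ where
  toEquiv := Equiv.Perm.ofSubtype (Equiv.Perm.subtypePerm f.toEquiv hX)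
  map_rel_iff' {u w} := by
    by_cases hu : u ∈ X <;> by_cases hw : w ∈ X <;>
      simp only [Equiv.Perm.ofSubtype_subtypePerm_of_mem,
        Equiv.Perm.ofSubtype_subtypePerm_of_not_mem, hu, hw, not_false_eq_true]
    · exact f.map_adj_iff
    · exact hadj u hu w hw
    · exact adj_comm .. |>.trans <| (hadj w hw u hu).trans (adj_comm ..)

section

variable (f : Γ ≃g Γ) {X : Set V} [DecidablePred (· ∈ X)] (hX : ∀ v, f v ∈ X ↔ v ∈ X)
    (hadj : ∀ u ∈ X, ∀ w ∉ X, Γ.Adj (f u) w ↔ Γ.Adj u w) {v : V}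

theorem piecewise_apply_of_mem (hv : v ∈ X) : f.piecewise X hX hadj v = f v :=
  Equiv.Perm.ofSubtype_subtypePerm_of_mem hX hv

theorem piecewise_apply_of_notMem (hv : v ∉ X) : f.piecewise X hX hadj v = v :=
  Equiv.Perm.ofSubtype_subtypePerm_of_not_mem hX hv

end

end SimpleGraph.Iso

namespace QuaternionGroup

variable {n : ℕ}

theorem xa_mul_self (i : ZMod (2 * n)) : xa i * xa i = a n := by
  simp [xa_mul_xa]

theorem a_mul_xa_eq_xa_mul_inv (i j : ZMod (2 * n)) : a i * xa j = xa j * (a i)⁻¹ := by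
  rw [a_mul_xa, show (a i)⁻¹ = a (-i) from rfl, xa_mul_a, sub_eq_add_neg]

theorem eq_a_n_of_orderOf_eq_two [NeZero n] {g : QuaternionGroup n} (hg : orderOf g = 2) :
    g = a n := by
  rcases g with i | i
  · have hi : i + i = 0 := by
      rw [← a.injEq, ← a_mul_a, a_zero, ← sq, ← hg, pow_orderOf_eq_one]
    have hne : i ≠ 0 := by rintro rfl; simp at hg
    obtain ⟨c, hc⟩ : 2 * n ∣ i.val + i.val := by
      rw [← ZMod.natCast_eq_zero_iff]; push_cast [ZMod.natCast_zmod_val]; exact hi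
    have hval : i.val = n := by
      have := ZMod.val_lt i
      have := (ZMod.val_ne_zero i).mpr hne
      have : c < 2 := by nlinarith
      interval_cases c <;> omega
    rw [← ZMod.natCast_zmod_val i, hval]
  · simp [orderOf_xa] at hg

theorem a_n_ne_one [NeZero n] : a (n : ZMod (2 * n)) ≠ 1 := by
  have := NeZero.pos n
  rw [one_def, Ne, a.injEq, ZMod.natCast_eq_zero_iff]
  exact Nat.not_dvd_of_pos_of_lt this (by omega)

def cyclicSubgroup (n : ℕ) : Subgroup (QuaternionGroup n) where
  carrier := Set.range a
  mul_mem' := by rintro _ _ ⟨i, rfl⟩ ⟨j, rfl⟩; exact ⟨i + j, (a_mul_a i j).symm⟩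
  one_mem' := ⟨0, a_zero⟩
  inv_mem' := by rintro _ ⟨i, rfl⟩; exact ⟨-i, rfl⟩

theorem a_mem_cyclicSubgroup (i : ZMod (2 * n)) : a i ∈ cyclicSubgroup n := ⟨i, rfl⟩

theorem xa_notMem_cyclicSubgroup (i : ZMod (2 * n)) : xa i ∉ cyclicSubgroup n := by
  rintro ⟨j, ⟨⟩⟩

theorem mul_self_eq_a_n_of_notMem_cyclicSubgroup {s : QuaternionGroup n}
    (hs : s ∉ cyclicSubgroup n) : s * s = a n := by
  rcases s with i | i
  · exact absurd (a_mem_cyclicSubgroup i) hs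
  · exact xa_mul_self i

theorem mul_eq_mul_inv_of_mem_cyclicSubgroup {g s : QuaternionGroup n}
    (hg : g ∈ cyclicSubgroup n) (hs : s ∉ cyclicSubgroup n) : g * s = s * g⁻¹ := by
  obtain ⟨i, rfl⟩ := hg
  rcases s with j | j
  · exact absurd (a_mem_cyclicSubgroup j) hs
  · exact a_mul_xa_eq_xa_mul_inv i j

end QuaternionGroup

section

variable {G V : Type*} [Group G] {Γ : SimpleGraph V} (e : G ≃* (Γ ≃g Γ))

theorem MulEquiv.map_mul_apply (g h : G) (v : V) : e (g * h) v = e g (e h v) := by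
  rw [map_mul, RelIso.mul_apply]

theorem mem_autOrbit_self (v : V) : v ∈ autOrbit e v :=
  ⟨1, by simp⟩

end

section GeneralizedDicyclic

/- `A` and `z` play the roles of the cyclic subgroup `⟨a⟩` of `Dic_n` and of its central
involution `a^n`. -/
variable {G V : Type*} [Group G] {Γ : SimpleGraph V} {A : Subgroup G} {z : G}

theorem inv_eq_mul_of_notMem (hsq : ∀ s ∉ A, s * s = z) {s : G} (hs : s ∉ A) : s⁻¹ = z * s := by
  rw [← hsq s⁻¹ (inv_mem_iff.not.mpr hs)]
  group

theorem mul_self_eq_one_of_notMem (hsq : ∀ s ∉ A, s * s = z) {s : G} (hs : s ∉ A) : z * z = 1 :=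
  calc z * z = z * s * s := by rw [mul_assoc, hsq s hs]
    _ = 1 := by rw [← inv_eq_mul_of_notMem hsq hs, inv_mul_cancel]

theorem adj_apply_mul_of_adj (e : G ≃* (Γ ≃g Γ)) (hsq : ∀ s ∉ A, s * s = z)
    (hconj : ∀ g ∈ A, ∀ s ∉ A, g * s = s * g⁻¹) {U W : G} (hU : U ∉ A) (hW : W ∈ A) {v : V}
    (h : Γ.Adj (e U v) (e W v)) : Γ.Adj (e W v) (e (z * U) v) := by
  have hmapU : W * U⁻¹ * U = W := by group
  have hmapW : W * U⁻¹ * W = z * U := by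
    rw [hconj W hW U⁻¹ (inv_mem_iff.not.mpr hU), mul_assoc, inv_mul_cancel, mul_one,
      inv_eq_mul_of_notMem hsq hU]
  have := (e (W * U⁻¹)).map_adj_iff.mpr h
  rwa [← e.map_mul_apply, ← e.map_mul_apply, hmapU, hmapW] at this

theorem exists_apply_eq_of_forall_apply_ne_mem_autOrbit (e : G ≃* (Γ ≃g Γ))
    (hsq : ∀ s ∉ A, s * s = z) (hconj : ∀ g ∈ A, ∀ s ∉ A, g * s = s * g⁻¹) (hzA : z ∈ A)
    {x : G} (hx : x ∉ A) {v : V} (hall : ∀ w, e z w ≠ w → w ∈ autOrbit e v) :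
    ∃ g : G, (∀ s ∉ A, e g (e s v) = e z (e s v)) ∧ ∀ w, (∀ s ∉ A, e s v ≠ w) → e g w = w := by
  classical
  have hzz := mul_self_eq_one_of_notMem hsq hx
  set X : Set V := {w | ∃ s ∉ A, e s v = w}
  have hX : ∀ w, e z w ∈ X ↔ w ∈ X := by
    refine fun w ↦ ⟨?_, ?_⟩
    · rintro ⟨s, hs, hsw⟩
      refine ⟨z * s, fun h ↦ hs ?_, ?_⟩
      · simpa [← mul_assoc, hzz] using A.mul_mem hzA h
      · rw [e.map_mul_apply, hsw, ← e.map_mul_apply, hzz, map_one, RelIso.one_apply]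
    · rintro ⟨s, hs, rfl⟩
      exact ⟨z * s, fun h ↦ hs ((A.mul_mem_cancel_left hzA).mp h), e.map_mul_apply z s v⟩
  have hcross : ∀ u ∈ X, ∀ w ∉ X, Γ.Adj u w → Γ.Adj (e z u) w := by
    rintro _ ⟨U, hU, rfl⟩ w hw h
    by_cases hzw : e z w = w
    · rw [← hzw]
      exact (e z).map_adj_iff.mpr h
    obtain ⟨W, rfl⟩ := hall w hzw
    have hW : W ∈ A := by
      by_contra hW
      exact hw ⟨W, hW, rfl⟩
    rw [← e.map_mul_apply]
    exact (adj_apply_mul_of_adj e hsq hconj hU hW h).symm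
  have hadj : ∀ u ∈ X, ∀ w ∉ X, Γ.Adj (e z u) w ↔ Γ.Adj u w := by
    refine fun u hu w hw ↦ ⟨fun h ↦ ?_, hcross u hu w hw⟩
    simpa [← e.map_mul_apply, hzz] using hcross (e z u) ((hX u).mpr hu) w hw h
  refine ⟨e.symm ((e z).piecewise X hX hadj), fun s hs ↦ ?_, fun w hw ↦ ?_⟩
  · rw [e.apply_symm_apply]
    exact SimpleGraph.Iso.piecewise_apply_of_mem _ _ _ ⟨s, hs, rfl⟩
  · rw [e.apply_symm_apply]
    exact SimpleGraph.Iso.piecewise_apply_of_notMem _ _ _ fun ⟨s, hs, hsw⟩ ↦ hw s hs hsw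

theorem exists_apply_ne_notMem_autOrbit (e : G ≃* (Γ ≃g Γ)) (hsq : ∀ s ∉ A, s * s = z)
    (hconj : ∀ g ∈ A, ∀ s ∉ A, g * s = s * g⁻¹) (hzA : z ∈ A) {x : G} (hx : x ∉ A) {v : V}
    (hv : e z v ≠ v) : ∃ w, e z w ≠ w ∧ w ∉ autOrbit e v := by
  by_contra! hall
  obtain ⟨g, hg_outer, hg_fix⟩ :=
    exists_apply_eq_of_forall_apply_ne_mem_autOrbit e hsq hconj hzA hx hall
  have hv_inner : ∀ s ∉ A, e s v ≠ v := fun s hs hsv ↦ hv <| by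
    rw [← hsq s hs, e.map_mul_apply, hsv, hsv]
  have hgv : e g v = v := hg_fix v hv_inner
  by_cases hg : g ∈ A
  · have hginv : e g⁻¹ v = v := by
      conv_lhs => rw [← hgv, ← e.map_mul_apply, inv_mul_cancel, map_one, RelIso.one_apply]
    have hzx : z * x = x * z := by rw [← hsq x hx, mul_assoc]
    apply hv
    apply (e x).injective
    calc e x (e z v) = e z (e x v) := by rw [← e.map_mul_apply, ← e.map_mul_apply, hzx]
      _ = e (g * x) v := by rw [e.map_mul_apply, hg_outer x hx]
      _ = e x v := by rw [hconj g hg x hx, e.map_mul_apply, hginv]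
  · exact hv_inner g hg hgv

end GeneralizedDicyclic

theorem Subgroup.odd_card_of_unique_involution_notMem {G : Type*} [Group G] [Finite G] {z : G}
    (hz : ∀ g : G, orderOf g = 2 → g = z) {H : Subgroup G} (hzH : z ∉ H) : Odd (Nat.card H) := by
  rw [Nat.odd_iff, ← Nat.two_dvd_ne_zero]
  intro h2
  obtain ⟨x, hx⟩ := exists_prime_orderOf_dvd_card' 2 h2
  exact hzH (hz x (by rwa [Subgroup.orderOf_coe]) ▸ x.2)

theorem eq_two_pow_of_mul_odd_eq {q r m s : ℕ} (hq : q.Prime ∨ q = 1) (hs : Odd s)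
    (hms : m * s = 2 ^ (r + 1) * q) (hm : m ≤ max (2 ^ (r + 1)) (2 ^ r * q)) :
    m = 2 ^ (r + 1) := by
  have hsdvd : s ∣ q := ((Nat.coprime_two_left.mpr hs).symm.pow_right (r + 1)).dvd_of_dvd_mul_left
    ⟨m, by rw [← hms, mul_comm]⟩
  rcases hq with hp | rfl
  · rcases hp.eq_one_or_self_of_dvd s hsdvd with rfl | rfl
    · rw [mul_one] at hms
      have := hp.two_le
      have := Nat.one_le_two_pow (n := r)
      have : max (2 ^ (r + 1)) (2 ^ r * q) < m := by
        rw [hms, pow_succ]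
        exact max_lt (by nlinarith) (by nlinarith)
      omega
    · exact Nat.eq_of_mul_eq_mul_right hp.pos hms
  · rwa [Nat.dvd_one.mp hsdvd, mul_one, mul_one] at hms

theorem card_autOrbit_eq_two_pow {G V : Type*} [Group G] [Finite G] {Γ : SimpleGraph V}
    (e : G ≃* (Γ ≃g Γ)) {q r : ℕ} (hq : q.Prime ∨ q = 1)
    (hG : Nat.card G = 2 ^ (r + 1) * q) {z : G} (hz : ∀ g : G, orderOf g = 2 → g = z) {v : V}
    (hv : e z v ≠ v) (hbound : Nat.card (autOrbit e v) ≤ max (2 ^ (r + 1)) (2 ^ r * q)) :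
    Nat.card (autOrbit e v) = 2 ^ (r + 1) := by
  let := MulAction.compHom V e.toMonoidHom
  have horbit : autOrbit e v = MulAction.orbit G v := rfl
  refine eq_two_pow_of_mul_odd_eq hq
    (Subgroup.odd_card_of_unique_involution_notMem hz (H := MulAction.stabilizer G v) hv) ?_ hbound
  rw [horbit, Nat.card_coe_set_eq, ← MulAction.index_stabilizer, Subgroup.index_mul_card, hG]

open QuaternionGroup in
theorem dicyclic_two_orbits_of_size_pow_general (q r : ℕ)
    (hq : (q.Prime ∧ Odd q) ∨ q = 1) (hr : 1 ≤ r)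
    (V : Type*) (Γ : SimpleGraph V)
    (e : QuaternionGroup (2 ^ (r - 1) * q) ≃* (Γ ≃g Γ))
    (horb : ∀ v : V, Nat.card (autOrbit e v) ≤ max (2 ^ (r + 1)) (2 ^ r * q)) :
    ∃ v w : V, autOrbit e v ≠ autOrbit e w ∧
      Nat.card (autOrbit e v) = 2 ^ (r + 1) ∧
      Nat.card (autOrbit e w) = 2 ^ (r + 1) := by
  have hq0 : q ≠ 0 := by rcases hq with ⟨hp, -⟩ | rfl; exacts [hp.ne_zero, one_ne_zero]
  have : NeZero (2 ^ (r - 1) * q) := ⟨by positivity⟩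
  have hcard : Nat.card (QuaternionGroup (2 ^ (r - 1) * q)) = 2 ^ (r + 1) * q := by
    obtain ⟨k, rfl⟩ : ∃ k, r = k + 1 := ⟨r - 1, by omega⟩
    rw [Nat.card_eq_fintype_card, QuaternionGroup.card, Nat.add_sub_cancel]
    ring
  obtain ⟨v, hv⟩ : ∃ v, e (a _) v ≠ v := by
    by_contra! h
    exact a_n_ne_one (e.map_eq_one_iff.mp (RelIso.ext h))
  obtain ⟨w, hw, hwv⟩ := exists_apply_ne_notMem_autOrbit e
    (fun _ ↦ mul_self_eq_a_n_of_notMem_cyclicSubgroup)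
    (fun _ hg _ ↦ mul_eq_mul_inv_of_mem_cyclicSubgroup hg) (a_mem_cyclicSubgroup _)
    (xa_notMem_cyclicSubgroup 0) hv
  have horbit_card {u : V} (hu : e (a _) u ≠ u) : Nat.card (autOrbit e u) = 2 ^ (r + 1) :=
    card_autOrbit_eq_two_pow e (hq.imp_left And.left) hcard
      (fun _ ↦ eq_a_n_of_orderOf_eq_two) hu (horb u)
  exact ⟨v, w, fun h ↦ hwv (h ▸ mem_autOrbit_self e w), horbit_card hv, horbit_card hw⟩

/-- Lemma: let `G` be the dicyclic group of order `2^(r+1) q` (with `q` an odd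
prime or `q = 1`, `r ≥ 1`), realised as `QuaternionGroup (2^(r-1) * q)`, acting
on the vertices of a finite graph `Γ` via an isomorphism `G ≃* Aut(Γ)`. If
every orbit has size at most `max (2^(r+1)) (2^r * q)`, then there are at
least two distinct orbits of size exactly `2^(r+1)`. -/
theorem dicyclic_two_orbits_of_size_pow (q r : ℕ)
    (hq : (q.Prime ∧ Odd q) ∨ q = 1) (hr : 1 ≤ r)
    (V : Type*) [Fintype V] (Γ : SimpleGraph V)
    (e : QuaternionGroup (2 ^ (r - 1) * q) ≃* (Γ ≃g Γ))
    (horb : ∀ v : V, Nat.card (autOrbit e v) ≤ max (2 ^ (r + 1)) (2 ^ r * q)) :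
    ∃ v w : V, autOrbit e v ≠ autOrbit e w ∧
      Nat.card (autOrbit e v) = 2 ^ (r + 1) ∧
      Nat.card (autOrbit e w) = 2 ^ (r + 1) :=
  dicyclic_two_orbits_of_size_pow_general q r hq hr V Γ e horb
end
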